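/- arXiv:1703.08790 — 3 statements merged into one kernel-verified Lean document; each statement's English description precedes it below -/
import Mathlib

section
/- Let m be a positive integer and let E₁, ..., E_m be independent exponential random variables, each with mean at least A > 0. Then for any 0 ≤ κ ≤ 1/4, P(∑_{i=1}^m E_i ≤ κ·A·m) ≤ (4/(3·√(2πm)))·(3κ)^m. -/
/-!
Let `c = 1/A`. Every density `r e^{-rx}` with `r ≤ c` is at most `c` and vanishes on `(-∞, 0)`,
so convolving it with a law whose CDF is at most `(c t)ⁿ / n!` gives a law whose CDF is at most
`∫₀ᵗ c (c (t - x))ⁿ / n! dx = (c t)ⁿ⁺¹ / (n + 1)!`. By induction,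
`P(∑ Eᵢ ≤ κ A m) ≤ (κ m)ᵐ / m!`, and Stirling's bound `m! ≥ √(2πm) (m/e)ᵐ` together with `e < 3`
finishes the proof.
-/

open MeasureTheory ProbabilityTheory Real
open scoped ENNReal Nat

/-- Dominates the CDF of a sum of `n` independent exponentials of rate `c`. -/
noncomputable def powCDFBound (c : ℝ) (n : ℕ) (t : ℝ) : ℝ≥0∞ :=
  (Set.Ici 0).indicator (fun t ↦ ENNReal.ofReal ((c * t) ^ n / n !)) t

theorem MeasureTheory.Measure.conv_Iic (ν ρ : Measure ℝ) [SFinite ρ] (t : ℝ) :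
    (ν ∗ ρ) (Set.Iic t) = ∫⁻ x, ρ (Set.Iic (t - x)) ∂ν := by
  rw [Measure.conv, Measure.map_apply measurable_add measurableSet_Iic,
    Measure.prod_apply (measurable_add measurableSet_Iic)]
  congr! with x
  ext y
  simp [le_sub_iff_add_le']

theorem exponentialPDF_le_ofReal (r x : ℝ) : exponentialPDF r x ≤ ENNReal.ofReal r := by
  rcases lt_or_ge x 0 with hx | hx
  · simp [exponentialPDF_of_neg hx]
  rw [exponentialPDF_of_nonneg hx]
  rcases lt_or_ge r 0 with hr | hr
  · simp [ENNReal.ofReal_of_nonpos (mul_nonpos_of_nonpos_of_nonneg hr.le (exp_pos _).le)]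
  refine ENNReal.ofReal_le_ofReal (mul_le_of_le_one_right hr ?_)
  exact exp_le_one_iff.2 (neg_nonpos.2 (mul_nonneg hr hx))

theorem integral_mul_pow_sub_div_factorial (c t : ℝ) (n : ℕ) :
    ∫ x in 0..t, c * (c * (t - x)) ^ n / n ! = (c * t) ^ (n + 1) / (n + 1)! := by
  simp_rw [mul_pow, mul_div_assoc, intervalIntegral.integral_const_mul, div_eq_mul_inv _ (n ! : ℝ),
    intervalIntegral.integral_mul_const, intervalIntegral.integral_comp_sub_left (fun x ↦ x ^ n),
    integral_pow, Nat.factorial_succ]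
  push_cast
  field_simp
  ring

theorem setLIntegral_Icc_mul_pow_sub_div_factorial {c t : ℝ} (hc : 0 ≤ c) (ht : 0 ≤ t) (n : ℕ) :
    ∫⁻ x in Set.Icc 0 t, ENNReal.ofReal (c * (c * (t - x)) ^ n / n !) =
      ENNReal.ofReal ((c * t) ^ (n + 1) / (n + 1)!) := by
  rw [← integral_mul_pow_sub_div_factorial, intervalIntegral.integral_of_le ht,
    ← setLIntegral_congr Ioc_ae_eq_Icc, ofReal_integral_eq_lintegral_ofReal]
  · exact Continuous.integrableOn_Ioc (by fun_prop)
  · refine (ae_restrict_iff' measurableSet_Ioc).2 (ae_of_all _ fun x hx ↦ ?_)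
    have : 0 ≤ t - x := sub_nonneg.2 hx.2
    positivity

theorem withDensity_conv_Iic_le_powCDFBound {f : ℝ → ℝ≥0∞} (hf : Measurable f)
    (hf_neg : ∀ x < 0, f x = 0) {c : ℝ} (hc : 0 ≤ c) (hf_le : ∀ x, f x ≤ ENNReal.ofReal c)
    {ρ : Measure ℝ} [SFinite ρ] {n : ℕ} (hρ : ∀ s, ρ (Set.Iic s) ≤ powCDFBound c n s) (t : ℝ) :
    (volume.withDensity f ∗ ρ) (Set.Iic t) ≤ powCDFBound c (n + 1) t := by
  set g : ℝ → ℝ≥0∞ := fun x ↦ ENNReal.ofReal (c * (c * (t - x)) ^ n / n !)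
  have hpointwise : ∀ x, f x * ρ (Set.Iic (t - x)) ≤ (Set.Icc 0 t).indicator g x := by
    intro x
    rcases lt_or_ge x 0 with hx | hx
    · simp [hf_neg x hx]
    rcases lt_or_ge t x with htx | htx
    · have : ρ (Set.Iic (t - x)) = 0 :=
        le_antisymm ((hρ _).trans_eq (by simp [powCDFBound, htx])) bot_le
      simp [this]
    rw [Set.indicator_of_mem (Set.mem_Icc.2 ⟨hx, htx⟩)]
    calc f x * ρ (Set.Iic (t - x))
        ≤ ENNReal.ofReal c * ENNReal.ofReal ((c * (t - x)) ^ n / n !) := by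
          gcongr
          · exact hf_le x
          · simpa [powCDFBound, htx] using hρ (t - x)
      _ = g x := by rw [← ENNReal.ofReal_mul hc, ← mul_div_assoc]
  calc (volume.withDensity f ∗ ρ) (Set.Iic t)
      = ∫⁻ x, ρ (Set.Iic (t - x)) ∂volume.withDensity f := Measure.conv_Iic _ _ t
    _ ≤ ∫⁻ x, f x * ρ (Set.Iic (t - x)) := lintegral_withDensity_le_lintegral_mul _ hf _
    _ ≤ ∫⁻ x in Set.Icc 0 t, g x := by
          rw [← lintegral_indicator measurableSet_Icc]
          exact lintegral_mono hpointwise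
    _ ≤ powCDFBound c (n + 1) t := by
          rcases lt_or_ge t 0 with ht | ht
          · simp [Set.Icc_eq_empty_of_lt ht]
          · simp [powCDFBound, ht, g, setLIntegral_Icc_mul_pow_sub_div_factorial hc ht]

theorem map_sum_Iic_le_powCDFBound {ι Ω : Type*} [MeasurableSpace Ω] {P : Measure Ω}
    [IsProbabilityMeasure P] {E : ι → Ω → ℝ} {r : ι → ℝ} {c : ℝ} (hc : 0 ≤ c) (hr : ∀ i, r i ≤ c)
    (hmeas : ∀ i, Measurable (E i)) (hindep : iIndepFun E P)
    (hdist : ∀ i, P.map (E i) = expMeasure (r i)) (s : Finset ι) (t : ℝ) :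
    P.map (∑ i ∈ s, E i) (Set.Iic t) ≤ powCDFBound c s.card t := by
  induction s using Finset.cons_induction generalizing t with
  | empty =>
    rw [Finset.sum_empty, Finset.card_empty]
    by_cases ht : 0 ≤ t <;> simp [powCDFBound, ht, Pi.zero_def, Measure.map_const]
  | cons i s hi ih =>
    have hindep_i : IndepFun (E i) (∑ j ∈ s, E j) P :=
      (hindep.indepFun_finsetSum_of_notMem hmeas hi).symm
    rw [Finset.sum_cons, Finset.card_cons,
      hindep_i.map_add_eq_map_conv_map (hmeas i) (by fun_prop), hdist i]
    exact withDensity_conv_Iic_le_powCDFBound (measurable_exponentialPDFReal _).ennreal_ofReal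
      (fun x hx ↦ exponentialPDF_of_neg hx) hc
      (fun x ↦ (exponentialPDF_le_ofReal _ x).trans (ENNReal.ofReal_le_ofReal (hr i))) ih t

theorem mul_pow_div_factorial_le {κ : ℝ} (hκ : 0 ≤ κ) {m : ℕ} (hm : 0 < m) :
    (κ * m) ^ m / m ! ≤ 4 / (3 * √(2 * π * m)) * (3 * κ) ^ m := by
  have hsqrt : 0 < √(2 * π * m) := by positivity
  calc (κ * m) ^ m / m !
      ≤ (κ * m) ^ m / (√(2 * π * m) * (m / exp 1) ^ m) := by
        gcongr
        exact Stirling.le_factorial_stirling m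
    _ = (exp 1 * κ) ^ m / √(2 * π * m) := by
        rw [div_pow]
        field_simp
        ring
    _ ≤ (3 * κ) ^ m / √(2 * π * m) := by
        gcongr
        exact exp_one_lt_three.le
    _ ≤ 4 / (3 * √(2 * π * m)) * (3 * κ) ^ m := by
        rw [div_mul_eq_mul_div, div_le_div_iff₀ hsqrt (by positivity)]
        nlinarith [pow_nonneg (by positivity : 0 ≤ 3 * κ) m]

theorem sum_exp_lower_tail_sharp_general {Ω : Type*} [MeasurableSpace Ω]
    (P : Measure Ω) [IsProbabilityMeasure P]
    (m : ℕ) (hm : 0 < m) (E : Fin m → Ω → ℝ) (μ : Fin m → ℝ) (A : ℝ) (hA : 0 < A)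
    (hmean : ∀ i, A ≤ μ i)
    (hmeas : ∀ i, Measurable (E i))
    (hindep : iIndepFun E P)
    (hdist : ∀ i, Measure.map (E i) P = expMeasure (1 / μ i))
    (κ : ℝ) (hκ0 : 0 ≤ κ) :
    P {ω | ∑ i, E i ω ≤ κ * A * m} ≤
      ENNReal.ofReal (4 / (3 * Real.sqrt (2 * Real.pi * m)) * (3 * κ) ^ m) := by
  have hbound := map_sum_Iic_le_powCDFBound (by positivity : 0 ≤ 1 / A)
    (fun i ↦ one_div_le_one_div_of_le hA (hmean i)) hmeas hindep hdist Finset.univ (κ * A * m)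
  rw [Finset.card_univ, Fintype.card_fin, Measure.map_apply (by fun_prop) measurableSet_Iic]
    at hbound
  calc P {ω | ∑ i, E i ω ≤ κ * A * m}
      ≤ powCDFBound (1 / A) m (κ * A * m) := by
        convert hbound using 2
        ext ω
        simp
    _ = ENNReal.ofReal ((κ * m) ^ m / m !) := by
        rw [powCDFBound, Set.indicator_of_mem (Set.mem_Ici.2 (by positivity))]
        field_simp
    _ ≤ _ := ENNReal.ofReal_le_ofReal (mul_pow_div_factorial_le hκ0 hm)

/-- Sharper lower tail bound for a sum of independent exponential random variables with
means at least `A > 0`: for `0 ≤ κ ≤ 1/4`,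
`P(∑ Eᵢ ≤ κ·A·m) ≤ (4/(3√(2πm)))·(3κ)^m`. -/
theorem sum_exp_lower_tail_sharp {Ω : Type*} [MeasurableSpace Ω]
    (P : Measure Ω) [IsProbabilityMeasure P]
    (m : ℕ) (hm : 0 < m) (E : Fin m → Ω → ℝ) (μ : Fin m → ℝ) (A : ℝ) (hA : 0 < A)
    (hmean : ∀ i, A ≤ μ i)
    (hmeas : ∀ i, Measurable (E i))
    (hindep : iIndepFun E P)
    (hdist : ∀ i, Measure.map (E i) P = expMeasure (1 / μ i))
    (κ : ℝ) (hκ0 : 0 ≤ κ) (hκ : κ ≤ 1 / 4) :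
    P {ω | ∑ i, E i ω ≤ κ * A * m} ≤
      ENNReal.ofReal (4 / (3 * Real.sqrt (2 * Real.pi * m)) * (3 * κ) ^ m) :=
  sum_exp_lower_tail_sharp_general P m hm E μ A hA hmean hmeas hindep hdist κ hκ0
end

section
/- For a positive integer m and real κ with 0 ≤ κ ≤ 1/4, the lower incomplete Gamma function satisfies γ(m, κm)/(m-1)! ≤ (4/3)·e^{-κm}·(κm)^m/m!. -/
/-!
The function `F(x) = e^{-x} x^m` has derivative `e^{-x} x^{m-1} (m - x)`, and for `t ≤ c m` the
factor `m - t` is at least `(1 - c) m`. Hence `t^{m-1} e^{-t} ≤ F'(t) / ((1 - c) m)` on `[0, x]`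
whenever `x ≤ c m`, and integrating gives `γ(m, x) ≤ e^{-x} x^m / ((1 - c) m)`.
With `c = 1/4` and `(m-1)! m = m!` this is the claimed bound.
-/

open Real

/-- The lower incomplete Gamma function `γ(m, x) = ∫₀ˣ t^(m-1) e^(-t) dt`. -/
noncomputable def lowerIncompleteGamma (m : ℕ) (x : ℝ) : ℝ :=
  ∫ t in (0:ℝ)..x, t ^ (m - 1) * Real.exp (-t)

theorem hasDerivAt_exp_neg_mul_pow_succ (n : ℕ) (t : ℝ) :
    HasDerivAt (fun t => exp (-t) * t ^ (n + 1)) (exp (-t) * t ^ n * (n + 1 - t)) t := by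
  refine (((hasDerivAt_neg t).exp).mul (hasDerivAt_pow (n + 1) t)).congr_deriv ?_
  push_cast
  ring

theorem integral_exp_neg_mul_pow_mul_sub (n : ℕ) (x : ℝ) :
    ∫ t in (0:ℝ)..x, exp (-t) * t ^ n * (n + 1 - t) = exp (-x) * x ^ (n + 1) := by
  rw [intervalIntegral.integral_eq_sub_of_hasDerivAt
    (fun t _ => hasDerivAt_exp_neg_mul_pow_succ n t)
    (Continuous.intervalIntegrable (by fun_prop) _ _)]
  simp

theorem lowerIncompleteGamma_le_of_le_mul {m : ℕ} (hm : 0 < m) {c x : ℝ} (hc : c < 1)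
    (hx0 : 0 ≤ x) (hxc : x ≤ c * m) :
    lowerIncompleteGamma m x ≤ exp (-x) * x ^ m / ((1 - c) * m) := by
  obtain ⟨n, rfl⟩ : ∃ n, m = n + 1 := ⟨m - 1, (Nat.succ_pred_eq_of_pos hm).symm⟩
  have hscale : 0 < (1 - c) * (n + 1 : ℝ) := mul_pos (by linarith) (by positivity)
  push_cast at hxc ⊢
  rw [← integral_exp_neg_mul_pow_mul_sub, ← intervalIntegral.integral_div, lowerIncompleteGamma,
    Nat.add_sub_cancel]
  refine intervalIntegral.integral_mono_on hx0 (Continuous.intervalIntegrable (by fun_prop) _ _)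
    (Continuous.intervalIntegrable (by fun_prop) _ _) fun t ht => ?_
  have hslack : (1 - c) * (n + 1 : ℝ) ≤ n + 1 - t := by linarith [ht.2]
  rw [le_div_iff₀ hscale, mul_comm (t ^ n)]
  exact mul_le_mul_of_nonneg_left hslack (mul_nonneg (exp_pos _).le (pow_nonneg ht.1 n))

/-- For a positive integer `m` and `0 ≤ κ ≤ 1/4`,
`γ(m, κm)/(m-1)! ≤ (4/3)·e^(-κm)·(κm)^m/m!`. -/
theorem lowerIncompleteGamma_bound (m : ℕ) (hm : 0 < m) (κ : ℝ) (hκ0 : 0 ≤ κ)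
    (hκ : κ ≤ 1 / 4) :
    lowerIncompleteGamma m (κ * m) / (Nat.factorial (m - 1)) ≤
      (4 / 3) * Real.exp (-(κ * m)) * (κ * m) ^ m / (Nat.factorial m) := by
  have hγ := lowerIncompleteGamma_le_of_le_mul hm (c := 1 / 4) (by norm_num) (by positivity)
    (mul_le_mul_of_nonneg_right hκ m.cast_nonneg)
  calc lowerIncompleteGamma m (κ * m) / (Nat.factorial (m - 1))
      ≤ exp (-(κ * m)) * (κ * m) ^ m / ((1 - 1 / 4) * m) / (Nat.factorial (m - 1)) := by
        gcongr
    _ = (4 / 3) * Real.exp (-(κ * m)) * (κ * m) ^ m / (Nat.factorial m) := by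
        rw [← Nat.mul_factorial_pred hm.ne']
        push_cast
        field_simp
        ring
end

section
/- Let k ≥ 3, δ ≤ 1/2 with δ > 0, A > 0, M ≥ 18, and let R₁, R₂, ... be independent exponential random variables with means A, A/r, A/r², ..., where r = 1 + δ/log k. Then for all sufficiently large k, P(∑_{i=1}^∞ R_i ≥ M·A·log k/δ) ≤ 2/k^{M/(12δ)+3}. -/
open MeasureTheory ProbabilityTheory Real Finset

/-! Chernoff's bound at `t = 1/(2A)`: for the rate `λ = rⁱ/A ≥ 1/A` the moment generating
function `λ/(λ - t)` is at most `exp (r⁻ⁱ)`, so by independence the moment generating function of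
every partial sum is at most `exp (∑ r⁻ⁱ) = exp (1 + log k/δ)`. Partial sums converge to the
series, so the series can only reach `T = M·A·log k/δ` if the partial sums eventually exceed `T/2`,
which gives the bound `exp (1 + L - M L/4)` with `L = log k/δ`; as `log k ≥ 1`, `δ ≤ 1/2` and
`M ≥ 18`, this is at most `k^-(M/(12δ)+3)`. -/

namespace ProbabilityTheory

lemma integral_exp_mul_expMeasure {r t : ℝ} (hr : 0 < r) (ht : t < r) :
    ∫ x, rexp (t * x) ∂expMeasure r = r / (r - t) := by
  have hdensity : ∀ x, (exponentialPDF r x).toReal • rexp (t * x)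
      = Set.indicator (Set.Ici 0) (fun x => r * rexp ((t - r) * x)) x := by
    intro x
    rcases le_or_gt 0 x with hx | hx
    · rw [Set.indicator_of_mem (Set.mem_Ici.2 hx), exponentialPDF_of_nonneg hx,
        ENNReal.toReal_ofReal (by positivity), smul_eq_mul, mul_assoc, ← exp_add]
      ring_nf
    · rw [Set.indicator_of_notMem (Set.notMem_Ici.2 hx), exponentialPDF_of_neg hx]
      simp
  have hexp : expMeasure r = volume.withDensity (exponentialPDF r) := rfl
  have hmeas : Measurable (exponentialPDF r) := (measurable_exponentialPDFReal r).ennreal_ofReal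
  rw [hexp, integral_withDensity_eq_integral_toReal_smul hmeas
      (ae_of_all _ fun _ => ENNReal.ofReal_lt_top)]
  simp_rw [hdensity]
  rw [integral_indicator measurableSet_Ici, integral_Ici_eq_integral_Ioi, integral_const_mul,
    integral_exp_mul_Ioi (by linarith), mul_zero, exp_zero, neg_div, ← div_neg, neg_sub, mul_one_div]

lemma integrable_exp_mul_expMeasure {r t : ℝ} (hr : 0 < r) (ht : t < r) :
    Integrable (fun x => rexp (t * x)) (expMeasure r) :=
  .of_integral_ne_zero <| by
    rw [integral_exp_mul_expMeasure hr ht]; exact (div_pos hr (by linarith)).ne'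

variable {Ω : Type*} {mΩ : MeasurableSpace Ω} {μ : Measure Ω} {X : Ω → ℝ} {r t : ℝ}

lemma integrable_exp_mul_of_map_eq_expMeasure (hX : AEMeasurable X μ)
    (hlaw : μ.map X = expMeasure r) (hr : 0 < r) (ht : t < r) :
    Integrable (fun ω => rexp (t * X ω)) μ := by
  have h := integrable_exp_mul_expMeasure hr ht
  rw [← hlaw, integrable_map_measure (by fun_prop) hX] at h
  exact h

lemma mgf_eq_of_map_eq_expMeasure (hX : AEMeasurable X μ)
    (hlaw : μ.map X = expMeasure r) (hr : 0 < r) (ht : t < r) :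
    mgf X μ t = r / (r - t) := by
  rw [← mgf_id_map hX, hlaw]
  exact integral_exp_mul_expMeasure hr ht

lemma mgf_le_exp_of_map_eq_expMeasure (hX : AEMeasurable X μ)
    (hlaw : μ.map X = expMeasure r) (hr : 0 < r) (ht : 0 ≤ t) (htr : 2 * t ≤ r) :
    mgf X μ t ≤ rexp (2 * t / r) := by
  rw [mgf_eq_of_map_eq_expMeasure hX hlaw hr (by linarith)]
  calc r / (r - t) ≤ 2 * t / r + 1 := by
        rw [div_le_iff₀ (by linarith), div_add_one hr.ne', div_mul_eq_mul_div, le_div_iff₀ hr]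
        nlinarith
    _ ≤ rexp (2 * t / r) := add_one_le_exp _

lemma measure_le_tsum_le_iSup_measure_le_sum (Y : ℕ → Ω → ℝ) {c T : ℝ} (hT : 0 < T)
    (hcT : c < T) :
    μ {ω | T ≤ ∑' i, Y i ω} ≤ ⨆ n, μ {ω | c ≤ ∑ i ∈ range n, Y i ω} := by
  have hsub : {ω | T ≤ ∑' i, Y i ω} ⊆ ⋃ N, {ω | ∀ n ≥ N, c ≤ ∑ i ∈ range n, Y i ω} := by
    intro ω hω
    have hsummable : Summable fun i => Y i ω := by
      by_contra hns
      rw [Set.mem_ofPred_eq, tsum_eq_zero_of_not_summable hns] at hω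
      linarith
    exact Set.mem_iUnion.2 <| Filter.eventually_atTop.1 <|
      hsummable.hasSum.tendsto_sum_nat.eventually (eventually_ge_nhds (hcT.trans_le hω))
  have hmono : Monotone fun N => {ω | ∀ n ≥ N, c ≤ ∑ i ∈ range n, Y i ω} :=
    fun _ _ hNM _ hω n hn => hω n (hNM.trans hn)
  calc μ {ω | T ≤ ∑' i, Y i ω}
      ≤ μ (⋃ N, {ω | ∀ n ≥ N, c ≤ ∑ i ∈ range n, Y i ω}) := measure_mono hsub
    _ = ⨆ N, μ {ω | ∀ n ≥ N, c ≤ ∑ i ∈ range n, Y i ω} := hmono.measure_iUnion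
    _ ≤ ⨆ n, μ {ω | c ≤ ∑ i ∈ range n, Y i ω} :=
        iSup_mono fun N => measure_mono fun _ hω => hω N le_rfl

theorem measure_le_tsum_le_of_iIndepFun_expMeasure {Y : ℕ → Ω → ℝ}
    (hmeas : ∀ i, Measurable (Y i)) (hindep : iIndepFun Y μ) {rate : ℕ → ℝ}
    (hlaw : ∀ i, μ.map (Y i) = expMeasure (rate i)) {ρ : ℝ} (hρ : 0 < ρ)
    (hρ_le : ∀ i, ρ ≤ rate i) (hsum : Summable fun i => (rate i)⁻¹) {T : ℝ} (hT : 0 < T) :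
    μ {ω | T ≤ ∑' i, Y i ω} ≤ ENNReal.ofReal (rexp (ρ * ∑' i, (rate i)⁻¹ - ρ * T / 4)) := by
  have := hindep.isProbabilityMeasure
  have hrate i : 0 < rate i := hρ.trans_le (hρ_le i)
  have hint i : Integrable (fun ω => rexp (ρ / 2 * Y i ω)) μ :=
    integrable_exp_mul_of_map_eq_expMeasure (hmeas i).aemeasurable (hlaw i) (hrate i)
      (by linarith [hρ_le i])
  refine (measure_le_tsum_le_iSup_measure_le_sum Y (c := T / 2) hT (by linarith)).trans
    (iSup_le fun n => ?_)
  rw [← ofReal_measureReal]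
  refine ENNReal.ofReal_le_ofReal ?_
  calc μ.real {ω | T / 2 ≤ ∑ i ∈ range n, Y i ω}
      ≤ rexp (-(ρ / 2) * (T / 2)) * mgf (∑ i ∈ range n, Y i) μ (ρ / 2) := by
        simpa only [Finset.sum_apply] using measure_ge_le_exp_mul_mgf (T / 2) (by positivity)
          (hindep.integrable_exp_mul_sum hmeas fun i _ => hint i)
    _ = rexp (-(ρ / 2) * (T / 2)) * ∏ i ∈ range n, mgf (Y i) μ (ρ / 2) := by
        rw [hindep.mgf_sum hmeas]
    _ ≤ rexp (-(ρ / 2) * (T / 2)) * ∏ i ∈ range n, rexp (ρ * (rate i)⁻¹) := by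
        gcongr with i
        · exact fun i _ => mgf_nonneg
        · refine (mgf_le_exp_of_map_eq_expMeasure (hmeas i).aemeasurable (hlaw i) (hrate i)
            (by positivity) (by linarith [hρ_le i])).trans_eq ?_
          ring_nf
    _ = rexp (ρ * ∑ i ∈ range n, (rate i)⁻¹ - ρ * T / 4) := by
        rw [← exp_sum, ← exp_add, ← mul_sum]; ring_nf
    _ ≤ rexp (ρ * ∑' i, (rate i)⁻¹ - ρ * T / 4) := by
        gcongr
        exact hsum.sum_le_tsum _ fun i _ => (inv_pos.2 (hrate i)).le

end ProbabilityTheory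

lemma hasSum_inv_one_add_pow_div {x : ℝ} (hx : 0 < x) (A : ℝ) :
    HasSum (fun i : ℕ => ((1 + x) ^ i / A)⁻¹) (A * (x⁻¹ + 1)) := by
  have hratio : (1 - (1 + x)⁻¹)⁻¹ = x⁻¹ + 1 := by
    have h : 1 - (1 + x)⁻¹ = x / (1 + x) := by field_simp; ring
    rw [h, inv_div, add_div, div_self hx.ne', one_div, add_comm]
  simp_rw [inv_div, div_eq_mul_inv, ← inv_pow, ← hratio]
  exact (hasSum_geometric_of_lt_one (by positivity)
    (inv_lt_one_of_one_lt₀ (lt_add_of_pos_right 1 hx))).mul_left A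

lemma exp_le_two_div_rpow {k δ M : ℝ} (hk : 0 < k) (hlog : 1 ≤ log k) (hδ : 0 < δ)
    (hδ' : δ ≤ 1 / 2) (hM : 18 ≤ M) :
    rexp (log k / δ + 1 - M * (log k / δ) / 4) ≤ 2 / k ^ (M / (12 * δ) + 3) := by
  set L := log k / δ with hL
  have hlogL : log k = δ * L := by rw [hL]; field_simp
  have hL2 : 2 ≤ L := by rw [hL, le_div_iff₀ hδ]; linarith
  have hexponent : L + 1 - M * L / 4 ≤ -(log k * (M / (12 * δ) + 3)) := by
    have : δ * L * (M / (12 * δ) + 3) = M * L / 12 + 3 * (δ * L) := by field_simp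
    rw [hlogL, this]
    nlinarith [mul_le_mul_of_nonneg_right hδ' (by linarith : (0:ℝ) ≤ L),
      mul_le_mul_of_nonneg_right hM (by linarith : (0:ℝ) ≤ L)]
  calc rexp (L + 1 - M * L / 4) ≤ rexp (-(log k * (M / (12 * δ) + 3))) :=
        exp_le_exp.2 hexponent
    _ = 1 / k ^ (M / (12 * δ) + 3) := by rw [rpow_def_of_pos hk, exp_neg, one_div]
    _ ≤ 2 / k ^ (M / (12 * δ) + 3) := by gcongr; norm_num

/-- Upper tail bound for a geometric sequence of independent exponential random variables:
with `r = 1 + δ/log k`, `0 < δ ≤ 1/2`, `A > 0`, `M ≥ 18`, and independent exponentials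
`R₁, R₂, …` with means `A, A/r, A/r², …`, for all sufficiently large `k ≥ 3`,
`P(∑ᵢ Rᵢ ≥ M·A·log k/δ) ≤ 2/k^(M/(12δ)+3)`. -/
theorem sum_geometric_exp_upper_tail (δ A M : ℝ) (hδ : 0 < δ) (hδ' : δ ≤ 1 / 2)
    (hA : 0 < A) (hM : 18 ≤ M) :
    ∃ k₀ : ℝ, 3 ≤ k₀ ∧ ∀ k : ℝ, k₀ ≤ k →
      ∀ (Ω : Type) (_ : MeasurableSpace Ω) (P : Measure Ω), IsProbabilityMeasure P →
        ∀ R : ℕ → Ω → ℝ, (∀ i, Measurable (R i)) →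
          iIndepFun R P →
          (∀ i : ℕ, Measure.map (R i) P = expMeasure ((1 + δ / Real.log k) ^ i / A)) →
          P {ω | M * A * Real.log k / δ ≤ ∑' i, R i ω} ≤
            ENNReal.ofReal (2 / k ^ (M / (12 * δ) + 3)) := by
  refine ⟨3, le_rfl, fun k hk Ω _ P _ R hmeas hindep hlaw => ?_⟩
  have hk0 : 0 < k := by linarith
  have hlogk : 1 ≤ log k := by
    rw [le_log_iff_exp_le hk0]
    exact (exp_one_lt_d9.le.trans (by norm_num)).trans hk
  have hsum := hasSum_inv_one_add_pow_div (x := δ / log k) (by positivity) A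
  have hrate i : A⁻¹ ≤ (1 + δ / log k) ^ i / A := by
    rw [inv_eq_one_div]; gcongr; exact one_le_pow₀ (le_add_of_nonneg_right (by positivity))
  have hT : 0 < M * A * log k / δ := by
    have : 0 < M := by linarith
    positivity
  calc P {ω | M * A * log k / δ ≤ ∑' i, R i ω}
      ≤ ENNReal.ofReal (rexp (A⁻¹ * (A * ((δ / log k)⁻¹ + 1))
          - A⁻¹ * (M * A * log k / δ) / 4)) := by
        rw [← hsum.tsum_eq]
        exact measure_le_tsum_le_of_iIndepFun_expMeasure hmeas hindep hlaw (inv_pos.2 hA) hrate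
          hsum.summable hT
    _ = ENNReal.ofReal (rexp (log k / δ + 1 - M * (log k / δ) / 4)) := by
        have := hA.ne'
        congr 2
        field_simp
    _ ≤ ENNReal.ofReal (2 / k ^ (M / (12 * δ) + 3)) :=
        ENNReal.ofReal_le_ofReal (exp_le_two_div_rpow hk0 hlogk hδ hδ' hM)
end
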